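/- Suppose d = a₁ and F + 1 = d·(F + 1 − g). Then ε_j = 0 for every j with 2 ≤ j ≤ a₁ − 1, n_Q = 1, R = a₁, and a_i = (Q + 1)·a₁ + (i − 1) for every i = 2, …, a₁. -/

import Mathlib

/-!
Counting S ∩ [0, F] and its complement, the hypothesis reads F + 1 = a₁ · #(S ∩ [0, F]). So
a₁ ∣ F + 1, which forces R = a₁ and #(S ∩ [0, F]) = Q + 1. The Q + 1 multiples 0, a₁, …, Q a₁
already lie in S ∩ [0, F], so they are all of it, and each I_k with k ≤ Q meets S only in k a₁.
By minimality no other generator is a multiple of a₁, nor a₁ plus an element of S, so each lies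
strictly between F + 1 = (Q + 1) a₁ and F + 1 + a₁; being a₁ − 1 strictly increasing numbers,
they fill that interval.
-/

open Set

lemma Fin.strictMono_apply_add_le {d : ℕ} {a : Fin d → ℕ} (ha : StrictMono a) {i j : Fin d}
    (hij : i ≤ j) : a i + j ≤ a j + i := by
  obtain ⟨i, hi⟩ := i
  obtain ⟨j, hj⟩ := j
  simp only [Fin.mk_le_mk] at hij ⊢
  induction j, hij using Nat.le_induction with
  | base => rfl
  | succ j _ ih =>
    have step : a ⟨j, by omega⟩ < a ⟨j + 1, hj⟩ := ha (Fin.mk_lt_mk.mpr (Nat.lt_succ_self j))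
    have := ih (by omega)
    omega

lemma Fin.strictMono_eq_add_of_forall_mem_Ioo {d N : ℕ} {a : Fin d → ℕ} (ha : StrictMono a)
    (h : ∀ i : Fin d, 0 < (i : ℕ) → a i ∈ Ioo N (N + d)) (i : Fin d) (hi : 0 < (i : ℕ)) :
    a i = N + i := by
  have hd : 1 < d := by omega
  have hfirst := Fin.strictMono_apply_add_le ha (i := ⟨1, hd⟩) (j := i) (Fin.mk_le_mk.mpr hi)
  have hlast := Fin.strictMono_apply_add_le ha (i := i) (j := ⟨d - 1, by omega⟩)
    (Fin.mk_le_mk.mpr (by omega))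
  have h1 := h ⟨1, hd⟩ Nat.one_pos
  have h2 := h ⟨d - 1, by omega⟩ (by simp only; omega)
  simp only [mem_Ioo] at h1 h2
  simp only at hfirst hlast
  omega

def natCombinations {d : ℕ} (a : Fin d → ℕ) : Set ℕ :=
  {m : ℕ | ∃ c : Fin d → ℕ, m = ∑ i, c i * a i}

section natCombinations

variable {d : ℕ} {a : Fin d → ℕ}

lemma sum_pi_single_mul (j : Fin d) (k : ℕ) :
    ∑ i, (Pi.single j k : Fin d → ℕ) i * a i = k * a j := by
  rw [Finset.sum_eq_single j (fun i _ hij => by simp [hij]) (by simp)]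
  simp

lemma mul_mem_natCombinations (k : ℕ) (j : Fin d) : k * a j ∈ natCombinations a :=
  ⟨Pi.single j k, (sum_pi_single_mul j k).symm⟩

lemma le_sum_mul_of_ne_zero {c : Fin d → ℕ} {j : Fin d} (hj : c j ≠ 0) :
    a j ≤ ∑ i, c i * a i :=
  calc a j ≤ c j * a j := Nat.le_mul_of_pos_left _ (Nat.pos_of_ne_zero hj)
    _ ≤ ∑ i, c i * a i :=
      Finset.single_le_sum (f := fun i => c i * a i) (fun _ _ => Nat.zero_le _)
        (Finset.mem_univ j)

lemma generator_ne_mul {i j : Fin d}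
    (hmin : ¬ ∃ c : Fin d → ℕ, c i = 0 ∧ a i = ∑ l, c l * a l) (hij : i ≠ j) (k : ℕ) :
    a i ≠ k * a j := fun h =>
  hmin ⟨Pi.single j k, by simp [hij], h.trans (sum_pi_single_mul j k).symm⟩

lemma generator_ne_add {i j : Fin d}
    (hmin : ¬ ∃ c : Fin d → ℕ, c i = 0 ∧ a i = ∑ l, c l * a l) (hij : i ≠ j) (hj : 0 < a j)
    {m : ℕ} (hm : m ∈ natCombinations a) : a i ≠ m + a j := by
  intro h
  obtain ⟨c, rfl⟩ := hm
  have hci : c i = 0 := by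
    by_contra hci
    have := le_sum_mul_of_ne_zero (a := a) hci
    omega
  refine hmin ⟨c + Pi.single j 1, by simp [hci, hij], ?_⟩
  simp only [Pi.add_apply, add_mul, Finset.sum_add_distrib, sum_pi_single_mul, one_mul, h]

lemma generator_mem_Ioc {F : ℕ} {i j : Fin d}
    (hmin : ¬ ∃ c : Fin d → ℕ, c i = 0 ∧ a i = ∑ l, c l * a l) (hij : i ≠ j) (hj : 0 < a j)
    (hdvd : ∀ m ∈ natCombinations a, m ≤ F → a j ∣ m)
    (hF : ∀ m, F < m → m ∈ natCombinations a) :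
    a i ∈ Ioc F (F + a j) := by
  constructor
  · by_contra h
    obtain ⟨k, hk⟩ := hdvd (a i) (by simpa using mul_mem_natCombinations 1 i) (by omega)
    exact generator_ne_mul hmin hij k (hk.trans (mul_comm _ _))
  · by_contra h
    exact generator_ne_add hmin hij hj (hF (a i - a j) (by omega)) (by omega)

lemma generators_eq_add_of_dvd {F : ℕ} (ha : StrictMono a)
    (hmin : ∀ j : Fin d, ¬ ∃ c : Fin d → ℕ, c j = 0 ∧ a j = ∑ i, c i * a i)
    (hd : 0 < d) (hda : d = a ⟨0, hd⟩) (hdvd : ∀ m ∈ natCombinations a, m ≤ F → d ∣ m)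
    (hF1 : d ∣ F + 1) (hF : ∀ m, F < m → m ∈ natCombinations a) (i : Fin d) (hi : 0 < (i : ℕ)) :
    a i = F + 1 + i := by
  refine Fin.strictMono_eq_add_of_forall_mem_Ioo ha (fun l hl => ?_) i hi
  have hl0 : l ≠ ⟨0, hd⟩ := fun h => by simp [h] at hl
  obtain ⟨hlow, hhigh⟩ := generator_mem_Ioc (hmin l) hl0 (hda ▸ hd) (hda ▸ hdvd) hF
  obtain ⟨k, hk⟩ := hF1
  have hne := generator_ne_mul (hmin l) hl0 k
  rw [← hda, mul_comm, ← hk] at hne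
  rw [← hda] at hhigh
  exact ⟨by omega, by omega⟩

end natCombinations

lemma ncard_inter_Icc_add_ncard_compl {S : Set ℕ} {F : ℕ} (hF : ∀ m, F < m → m ∈ S) :
    (S ∩ Icc 0 F).ncard + Sᶜ.ncard = F + 1 := by
  have hcompl : Icc 0 F \ S = Sᶜ := by
    ext m
    simp only [mem_sdiff, mem_Icc, mem_compl_iff, and_iff_right_iff_imp]
    exact fun hm => ⟨Nat.zero_le m, not_lt.mp (mt (hF m) hm)⟩
  rw [inter_comm, ← hcompl, ncard_inter_add_ncard_sdiff_eq_ncard _ _ (finite_Icc 0 F),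
    ncard_Icc_nat, Nat.sub_zero]

lemma dvd_of_ncard_inter_Icc_eq {S : Set ℕ} {a F Q : ℕ} (ha : 0 < a) (hmul : ∀ k, k * a ∈ S)
    (hF : F + 1 = (Q + 1) * a) (hcard : (S ∩ Icc 0 F).ncard = Q + 1) :
    ∀ m ∈ S, m ≤ F → a ∣ m := by
  have hsub : (· * a) '' Iic Q ⊆ S ∩ Icc 0 F := by
    rintro _ ⟨k, hk, rfl⟩
    have : k * a ≤ Q * a := Nat.mul_le_mul_right a hk
    exact ⟨hmul k, Nat.zero_le _, show k * a ≤ F by rw [add_mul] at hF; omega⟩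
  have himage : ((· * a) '' Iic Q).ncard = Q + 1 := by
    rw [ncard_image_of_injective _ (mul_left_injective₀ ha.ne'), ncard_Iic_nat]
  have heq := eq_of_subset_of_ncard_le hsub (by rw [hcard, himage])
    ((finite_Icc 0 F).inter_of_right S)
  intro m hm hmF
  obtain ⟨k, -, rfl⟩ : m ∈ (· * a) '' Iic Q := heq ▸ ⟨hm, Nat.zero_le m, hmF⟩
  exact dvd_mul_left a k

lemma Icc_inter_eq_singleton_of_dvd {S : Set ℕ} {a F k : ℕ} (ha : 0 < a)
    (hdvd : ∀ m ∈ S, m ≤ F → a ∣ m) (hk : k * a ∈ S) (hkF : (k + 1) * a ≤ F + 1) :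
    Icc (k * a) ((k + 1) * a - 1) ∩ S = {k * a} := by
  ext m
  simp only [mem_inter_iff, mem_Icc, mem_singleton_iff]
  constructor
  · rintro ⟨⟨hkm, hmk⟩, hm⟩
    obtain ⟨t, rfl⟩ := hdvd m hm (by omega)
    have hle : k ≤ t := Nat.le_of_mul_le_mul_right (by rwa [mul_comm a t] at hkm) ha
    have hlt : t < k + 1 := by
      have : 0 < (k + 1) * a := Nat.mul_pos k.succ_pos ha
      exact Nat.lt_of_mul_lt_mul_right (a := a) (by rw [mul_comm t a]; omega)
    rw [mul_comm, show t = k by omega]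
  · rintro rfl
    exact ⟨⟨le_rfl, by rw [add_mul]; omega⟩, hk⟩

theorem stmt10
    (d : ℕ) (hd : 2 ≤ d)
    (a : Fin d → ℕ)
    (ha_mono : StrictMono a)
    (a1 : ℕ) (ha1 : a1 = a ⟨0, by omega⟩)
    (S : Set ℕ)
    (hS : S = {m : ℕ | ∃ c : Fin d → ℕ, m = ∑ i, c i * a i})
    (hmin : ∀ j : Fin d, ¬ ∃ c : Fin d → ℕ, c j = 0 ∧ a j = ∑ i, c i * a i)
    (F : ℕ) (hFmax : ∀ m : ℕ, F < m → m ∈ S)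
    (g : ℕ) (hg : g = {m : ℕ | m ∉ S}.ncard)
    (Q R : ℕ) (hQR : F + 1 = Q * a1 + R) (hR2 : 2 ≤ R) (hRa : R ≤ a1)
    (I : ℕ → Set ℕ) (hI : ∀ k, I k = Set.Icc (k * a1) ((k + 1) * a1 - 1))
    (n : ℕ → ℕ) (hn : ∀ k, n k = (S ∩ Set.Icc 0 F ∩ I k).ncard)
    (ε : ℕ → ℕ) (hε : ∀ j, ε j = {k : ℕ | k < Q ∧ (I k ∩ S).ncard = j}.ncard)
    (hda : d = a1)
    (heq : (F : ℤ) + 1 = (d : ℤ) * ((F : ℤ) + 1 - (g : ℤ)))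
    :
    (∀ j : ℕ, 2 ≤ j → j ≤ a1 - 1 → ε j = 0) ∧ n Q = 1 ∧ R = a1 ∧
      (∀ i : Fin d, 0 < (i : ℕ) → a i = (Q + 1) * a1 + (i : ℕ)) := by
  obtain rfl : S = natCombinations a := hS
  have ha1_pos : 0 < a1 := by omega
  have hmul : ∀ k, k * a1 ∈ natCombinations a := fun k => ha1 ▸ mul_mem_natCombinations k _
  have hcount : (natCombinations a ∩ Icc 0 F).ncard + g = F + 1 := by
    rw [hg]; exact ncard_inter_Icc_add_ncard_compl hFmax
  have hkey : F + 1 = a1 * (natCombinations a ∩ Icc 0 F).ncard := by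
    subst hda; zify; rw [heq]; congr 1; omega
  have hR : R = a1 := by
    have hdvd : a1 ∣ R := (Nat.dvd_add_right (dvd_mul_left a1 Q)).mp (hQR ▸ ⟨_, hkey⟩)
    exact le_antisymm hRa (Nat.le_of_dvd (by omega) hdvd)
  have hF1 : F + 1 = (Q + 1) * a1 := by rw [hQR, hR, add_mul, one_mul]
  have hdvd := dvd_of_ncard_inter_Icc_eq ha1_pos hmul hF1
    (Nat.eq_of_mul_eq_mul_left ha1_pos (by rw [← hkey, hF1, mul_comm])).symm
  have hIk : ∀ k ≤ Q, I k ∩ natCombinations a = {k * a1} := fun k hk => by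
    rw [hI]
    exact Icc_inter_eq_singleton_of_dvd ha1_pos hdvd (hmul k)
      (hF1 ▸ Nat.mul_le_mul_right a1 (by omega))
  refine ⟨fun j hj _ => ?_, ?_, hR, ?_⟩
  · have hempty : {k | k < Q ∧ (I k ∩ natCombinations a).ncard = j} = ∅ :=
      eq_empty_of_forall_notMem fun k ⟨hkQ, hk⟩ => by
        rw [hIk k hkQ.le, ncard_singleton] at hk; omega
    rw [hε, hempty, ncard_empty]
  · have hsub : I Q ⊆ Icc 0 F := by
      rw [hI]; exact Icc_subset_Icc (Nat.zero_le _) (by omega)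
    rw [hn, inter_assoc, inter_eq_right.mpr hsub, inter_comm, hIk Q le_rfl, ncard_singleton]
  · intro i hi
    rw [generators_eq_add_of_dvd ha_mono hmin (by omega) (hda.trans ha1) (hda ▸ hdvd)
      ⟨Q + 1, by rw [hF1, hda, mul_comm]⟩ hFmax i hi, hF1]
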